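/- Let S be a semigroup that is the disjoint union of free monogenic subsemigroups ⟨a⟩, ⟨b⟩, ⟨c⟩, with ab = ba = a^i for some i ≥ 1. Then neither ac nor ca lies in ⟨b⟩. -/

import Mathlib

/-- `pw a n` is `a ^ n` for `n ≥ 1` (with junk value `a` at `n = 0`),
defined in any magma. -/
def pw {S : Type*} [Mul S] (a : S) : ℕ → S
  | 0 => a
  | 1 => a
  | n + 2 => pw a (n + 1) * a

/-- The monogenic subsemigroup `⟨a⟩ = {a^n : n ≥ 1}`. -/
def genSet {S : Type*} [Mul S] (a : S) : Set S := {x | ∃ n, 1 ≤ n ∧ pw a n = x}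

/-- `a` has infinite order: its positive powers are pairwise distinct,
i.e. `⟨a⟩` is free monogenic. -/
def InfOrder {S : Type*} [Mul S] (a : S) : Prop :=
  ∀ m n : ℕ, 1 ≤ m → 1 ≤ n → pw a m = pw a n → m = n

/-!
If `a * c = b ^ m`, the relation `b * a = a ^ i` gives two cases. For `i ≥ 2`,
`b * (a * c) = a ^ (i - 1) * b ^ m`, which lies in both `⟨b⟩` and `⟨a⟩` since `a * b ∈ ⟨a⟩`
makes `⟨a⟩` stable under right multiplication by `b`. For `i ≤ 1` (`pw a 0 = a` too),
`b ^ m * a = a`, so `c * a` is idempotent; but a union of free monogenic semigroups has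
no idempotents.
The claim for `c * a` is the mirror image.
-/

section Semigroup

variable {S : Type*} [Semigroup S]

theorem pw_succ (a : S) {n : ℕ} (hn : 1 ≤ n) : pw a (n + 1) = pw a n * a := by
  obtain ⟨k, rfl⟩ := Nat.exists_eq_add_of_le' hn
  rfl

theorem pw_add (a : S) {m n : ℕ} (hm : 1 ≤ m) (hn : 1 ≤ n) :
    pw a (m + n) = pw a m * pw a n := by
  induction n, hn using Nat.le_induction with
  | base => exact pw_succ a hm
  | succ n hn ih => rw [← add_assoc, pw_succ a (by omega), ih, pw_succ a hn, mul_assoc]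

theorem pw_succ' (a : S) {n : ℕ} (hn : 1 ≤ n) : pw a (n + 1) = a * pw a n := by
  rw [add_comm, pw_add a le_rfl hn]
  rfl

theorem pw_mem_genSet (a : S) {n : ℕ} (hn : 1 ≤ n) : pw a n ∈ genSet a := ⟨n, hn, rfl⟩

theorem mul_mem_genSet {a x y : S} (hx : x ∈ genSet a) (hy : y ∈ genSet a) :
    x * y ∈ genSet a := by
  obtain ⟨m, hm, rfl⟩ := hx
  obtain ⟨n, hn, rfl⟩ := hy
  rw [← pw_add a hm hn]
  exact pw_mem_genSet a (by omega)

theorem not_isIdempotentElem_of_mem_genSet {a x : S} (ha : InfOrder a) (hx : x ∈ genSet a) :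
    ¬IsIdempotentElem x := by
  obtain ⟨n, hn, rfl⟩ := hx
  intro hidem
  have := ha (n + n) n (by omega) hn (by rw [pw_add a hn hn]; exact hidem)
  omega

theorem not_isIdempotentElem_of_union_genSet_eq_univ {a b c : S}
    (ha : InfOrder a) (hb : InfOrder b) (hc : InfOrder c)
    (hcover : genSet a ∪ genSet b ∪ genSet c = Set.univ) (x : S) : ¬IsIdempotentElem x := by
  rcases hcover ▸ Set.mem_univ x with (hx | hx) | hx
  exacts [not_isIdempotentElem_of_mem_genSet ha hx, not_isIdempotentElem_of_mem_genSet hb hx,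
    not_isIdempotentElem_of_mem_genSet hc hx]

theorem mul_pw_mem_of_forall_mul_mem {T : Set S} {b x : S} (hT : ∀ y ∈ T, y * b ∈ T)
    (hx : x ∈ T) {m : ℕ} (hm : 1 ≤ m) : x * pw b m ∈ T := by
  induction m, hm using Nat.le_induction with
  | base => exact hT x hx
  | succ m hm ih => rw [pw_succ b hm, ← mul_assoc]; exact hT _ ih

theorem pw_mul_mem_of_forall_mul_mem {T : Set S} {b x : S} (hT : ∀ y ∈ T, b * y ∈ T)
    (hx : x ∈ T) {m : ℕ} (hm : 1 ≤ m) : pw b m * x ∈ T := by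
  induction m, hm using Nat.le_induction with
  | base => exact hT x hx
  | succ m hm ih => rw [pw_succ' b hm, mul_assoc]; exact hT _ ih

theorem mul_mem_genSet_of_mul_mem {a b x : S} (hab : a * b ∈ genSet a) (hx : x ∈ genSet a) :
    x * b ∈ genSet a := by
  obtain ⟨_ | _ | k, hk, rfl⟩ := hx
  · omega
  · exact hab
  · rw [pw_succ a (by omega), mul_assoc]
    exact mul_mem_genSet (pw_mem_genSet a (by omega)) hab

theorem mul_mem_genSet_of_mul_mem' {a b x : S} (hba : b * a ∈ genSet a) (hx : x ∈ genSet a) :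
    b * x ∈ genSet a := by
  obtain ⟨_ | _ | k, hk, rfl⟩ := hx
  · omega
  · exact hba
  · rw [pw_succ' a (by omega), ← mul_assoc]
    exact mul_mem_genSet hba (pw_mem_genSet a (by omega))

theorem isIdempotentElem_mul_of_mul_mem_genSet {a b c : S} (hba : b * a = a)
    (h : a * c ∈ genSet b) : IsIdempotentElem (c * a) := by
  obtain ⟨m, hm, hmc⟩ := h
  have hbma : pw b m * a = a :=
    pw_mul_mem_of_forall_mul_mem (T := {a}) (by rintro _ rfl; exact hba) rfl hm
  calc c * a * (c * a) = c * (a * c * a) := by simp only [mul_assoc]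
    _ = c * a := by rw [← hmc, hbma]

theorem isIdempotentElem_mul_of_mul_mem_genSet' {a b c : S} (hab : a * b = a)
    (h : c * a ∈ genSet b) : IsIdempotentElem (a * c) := by
  obtain ⟨m, hm, hmc⟩ := h
  have habm : a * pw b m = a :=
    mul_pw_mem_of_forall_mul_mem (T := {a}) (by rintro _ rfl; exact hab) rfl hm
  calc a * c * (a * c) = a * (c * a) * c := by simp only [mul_assoc]
    _ = a * c := by rw [← hmc, habm]

theorem mul_notMem_genSet_of_mul_eq_pw {a b c : S} (hdisj : Disjoint (genSet a) (genSet b))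
    (hab : a * b ∈ genSet a) {j : ℕ} (hba : b * a = pw a (j + 2)) : a * c ∉ genSet b := by
  rintro ⟨m, hm, hmc⟩
  have hB : b * (a * c) ∈ genSet b := by
    rw [← hmc, ← pw_succ' b hm]
    exact pw_mem_genSet b (by omega)
  have hA : b * (a * c) ∈ genSet a := by
    rw [← mul_assoc, hba, pw_succ a (by omega), mul_assoc, ← hmc]
    exact mul_pw_mem_of_forall_mul_mem (fun _ ↦ mul_mem_genSet_of_mul_mem hab)
      (pw_mem_genSet a (by omega)) hm
  exact Set.disjoint_left.mp hdisj hA hB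

theorem mul_notMem_genSet_of_mul_eq_pw' {a b c : S} (hdisj : Disjoint (genSet a) (genSet b))
    (hba : b * a ∈ genSet a) {j : ℕ} (hab : a * b = pw a (j + 2)) : c * a ∉ genSet b := by
  rintro ⟨m, hm, hmc⟩
  have hB : c * a * b ∈ genSet b := by
    rw [← hmc, ← pw_succ b hm]
    exact pw_mem_genSet b (by omega)
  have hA : c * a * b ∈ genSet a := by
    rw [mul_assoc, hab, pw_succ' a (by omega), ← mul_assoc, ← hmc]
    exact pw_mul_mem_of_forall_mul_mem (fun _ ↦ mul_mem_genSet_of_mul_mem' hba)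
      (pw_mem_genSet a (by omega)) hm
  exact Set.disjoint_left.mp hdisj hA hB

end Semigroup

theorem stmt_9_general {S : Type*} [Semigroup S] (a b c : S)
    (ha : InfOrder a) (hb : InfOrder b) (hc : InfOrder c)
    (hab : genSet a ∩ genSet b = ∅)
    (hcover : genSet a ∪ genSet b ∪ genSet c = Set.univ)
    (i : ℕ) (h1 : a * b = pw a i) (h2 : b * a = pw a i) :
    a * c ∉ genSet b ∧ c * a ∉ genSet b := by
  have hnoidem := not_isIdempotentElem_of_union_genSet_eq_univ ha hb hc hcover
  match i with
  | 0 | 1 =>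
    exact ⟨fun h ↦ hnoidem _ (isIdempotentElem_mul_of_mul_mem_genSet h2 h),
      fun h ↦ hnoidem _ (isIdempotentElem_mul_of_mul_mem_genSet' h1 h)⟩
  | j + 2 =>
    have hdisj := Set.disjoint_iff_inter_eq_empty.mpr hab
    have hab_mem : a * b ∈ genSet a := h1 ▸ pw_mem_genSet a (by omega)
    have hba_mem : b * a ∈ genSet a := h2 ▸ pw_mem_genSet a (by omega)
    exact ⟨mul_notMem_genSet_of_mul_eq_pw hdisj hab_mem h2,
      mul_notMem_genSet_of_mul_eq_pw' hdisj hba_mem h1⟩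

theorem stmt_9 {S : Type*} [Semigroup S] (a b c : S)
    (ha : InfOrder a) (hb : InfOrder b) (hc : InfOrder c)
    (hab : genSet a ∩ genSet b = ∅) (hac : genSet a ∩ genSet c = ∅)
    (hbc : genSet b ∩ genSet c = ∅)
    (hcover : genSet a ∪ genSet b ∪ genSet c = Set.univ)
    (i : ℕ) (hi : 1 ≤ i) (h1 : a * b = pw a i) (h2 : b * a = pw a i) :
    a * c ∉ genSet b ∧ c * a ∉ genSet b :=
  stmt_9_general a b c ha hb hc hab hcover i h1 h2
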